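/- arXiv:1710.07789 — 7 statements merged into one kernel-verified Lean document; each statement's English description precedes it below -/
import Mathlib

section
/- Let Φ : Rⁿ → F_q^{3n} be the Gray map, τ_α the skew α-constacyclic shift on Rⁿ (with respect to an automorphism θ of R fixing α), and π₃ the skew α-quasi-cyclic shift of index 3 on (F_qⁿ)³ = F_q^{3n} (applying the skew α-constacyclic shift of F_qⁿ on each of the 3 blocks). Then Φ ∘ τ_α = π₃ ∘ Φ. -/
/-- The ring `R = F + uF + vF` with `u² = u`, `v² = v`, `uv = vu = 0`,
represented as free `F`-module with basis `{1, u, v}`: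
`⟨a, b, c⟩` stands for `a + u b + v c`. -/
@[ext] structure R3 (F : Type*) where
  a : F
  b : F
  c : F

namespace R3

variable {F : Type*} [CommRing F]

instance : Zero (R3 F) := ⟨⟨0, 0, 0⟩⟩
instance : One (R3 F) := ⟨⟨1, 0, 0⟩⟩
instance : Add (R3 F) := ⟨fun x y => ⟨x.a + y.a, x.b + y.b, x.c + y.c⟩⟩
instance : Neg (R3 F) := ⟨fun x => ⟨-x.a, -x.b, -x.c⟩⟩
instance : Mul (R3 F) :=
  ⟨fun x y => ⟨x.a * y.a, x.a * y.b + x.b * y.a + x.b * y.b,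
    x.a * y.c + x.c * y.a + x.c * y.c⟩⟩

@[simp] lemma zero_a : (0 : R3 F).a = 0 := rfl
@[simp] lemma zero_b : (0 : R3 F).b = 0 := rfl
@[simp] lemma zero_c : (0 : R3 F).c = 0 := rfl
@[simp] lemma one_a : (1 : R3 F).a = 1 := rfl
@[simp] lemma one_b : (1 : R3 F).b = 0 := rfl
@[simp] lemma one_c : (1 : R3 F).c = 0 := rfl
@[simp] lemma add_a (x y : R3 F) : (x + y).a = x.a + y.a := rfl
@[simp] lemma add_b (x y : R3 F) : (x + y).b = x.b + y.b := rfl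
@[simp] lemma add_c (x y : R3 F) : (x + y).c = x.c + y.c := rfl
@[simp] lemma neg_a (x : R3 F) : (-x).a = -x.a := rfl
@[simp] lemma neg_b (x : R3 F) : (-x).b = -x.b := rfl
@[simp] lemma neg_c (x : R3 F) : (-x).c = -x.c := rfl
@[simp] lemma mul_a (x y : R3 F) : (x * y).a = x.a * y.a := rfl
@[simp] lemma mul_b (x y : R3 F) :
    (x * y).b = x.a * y.b + x.b * y.a + x.b * y.b := rfl
@[simp] lemma mul_c (x y : R3 F) :
    (x * y).c = x.a * y.c + x.c * y.a + x.c * y.c := rfl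

instance : CommRing (R3 F) where
  add := (· + ·)
  zero := 0
  neg := Neg.neg
  mul := (· * ·)
  one := 1
  add_assoc x y z := by ext <;> simp <;> ring
  zero_add x := by ext <;> simp
  add_zero x := by ext <;> simp
  add_comm x y := by ext <;> simp <;> ring
  neg_add_cancel x := by ext <;> simp
  mul_assoc x y z := by ext <;> simp <;> ring
  one_mul x := by ext <;> simp
  mul_one x := by ext <;> simp
  left_distrib x y z := by ext <;> simp <;> ring
  right_distrib x y z := by ext <;> simp <;> ring
  zero_mul x := by ext <;> simp
  mul_zero x := by ext <;> simp
  mul_comm x y := by ext <;> simp <;> ring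
  nsmul := nsmulRec
  zsmul := zsmulRec

/-- the element `u` -/
def u : R3 F := ⟨0, 1, 0⟩
/-- the element `v` -/
def v : R3 F := ⟨0, 0, 1⟩
/-- the canonical embedding of `F` into `R3 F` -/
def ofF (x : F) : R3 F := ⟨x, 0, 0⟩

instance : SMul F (R3 F) := ⟨fun r x => ⟨r * x.a, r * x.b, r * x.c⟩⟩

@[simp] lemma smul_a (r : F) (x : R3 F) : (r • x).a = r * x.a := rfl
@[simp] lemma smul_b (r : F) (x : R3 F) : (r • x).b = r * x.b := rfl
@[simp] lemma smul_c (r : F) (x : R3 F) : (r • x).c = r * x.c := rfl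

instance : Module F (R3 F) where
  one_smul x := by ext <;> simp
  mul_smul r s x := by ext <;> simp <;> ring
  smul_zero r := by ext <;> simp
  smul_add r x y := by ext <;> simp <;> ring
  add_smul r s x := by ext <;> simp <;> ring
  zero_smul x := by ext <;> simp

instance [Fintype F] : Fintype (R3 F) :=
  Fintype.ofEquiv (F × F × F)
    { toFun := fun t => ⟨t.1, t.2.1, t.2.2⟩
      invFun := fun x => (x.a, x.b, x.c)
      left_inv := fun _ => rfl
      right_inv := fun _ => rfl }

/-- the componentwise extension to `R3 F` of a map `σ : F → F`:
`a + u b + v c ↦ σ a + u (σ b) + v (σ c)`. -/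
def lift (σ : F → F) : R3 F → R3 F := fun x => ⟨σ x.a, σ x.b, σ x.c⟩

/-- the Gray map `a + u b + v c ↦ (a, a + b, a + c)`. -/
def gray (x : R3 F) : F × F × F := (x.a, x.a + x.b, x.a + x.c)

/-- the Gray map applied componentwise to vectors, with the three blocks
of length `n` arranged as a triple. -/
def grayV {n : ℕ} (x : Fin n → R3 F) :
    (Fin n → F) × (Fin n → F) × (Fin n → F) :=
  (fun i => (x i).a, fun i => (x i).a + (x i).b, fun i => (x i).a + (x i).c)

end R3

/-- the skew `α`-constacyclic shift `(c₀, …, c_{n-1}) ↦ (α θ(c_{n-1}), θ(c₀), …, θ(c_{n-2}))`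
over a ring `R` with respect to a map `θ : R → R`. -/
def tauShift {R : Type*} [Ring R] {n : ℕ} [NeZero n] (θ : R → R) (α : R)
    (c : Fin n → R) : Fin n → R :=
  fun i => (if i = 0 then α else 1) * θ (c (i - 1))

/-- first component code `C₁ = {a : a + u b + v c ∈ C}` of a code over `R3 F`. -/
def comp1 {F : Type*} [CommRing F] {n : ℕ} (C : Set (Fin n → R3 F)) :
    Set (Fin n → F) :=
  {y | ∃ x ∈ C, y = fun i => (x i).a}

/-- second component code `C₂ = {a + b : a + u b + v c ∈ C}`. -/
def comp2 {F : Type*} [CommRing F] {n : ℕ} (C : Set (Fin n → R3 F)) :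
    Set (Fin n → F) :=
  {y | ∃ x ∈ C, y = fun i => (x i).a + (x i).b}

/-- third component code `C₃ = {a + c : a + u b + v c ∈ C}`. -/
def comp3 {F : Type*} [CommRing F] {n : ℕ} (C : Set (Fin n → R3 F)) :
    Set (Fin n → F) :=
  {y | ∃ x ∈ C, y = fun i => (x i).a + (x i).c}

/-- Euclidean dual of a code over a commutative ring. -/
def dualCode {R : Type*} [CommRing R] {n : ℕ} (C : Set (Fin n → R)) :
    Set (Fin n → R) :=
  {x | ∀ y ∈ C, ∑ i, x i * y i = 0}

/-- Euclidean dual of a code of length `3n` over `F`, written as triples of blocks. -/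
def dualCode3 {F : Type*} [CommRing F] {n : ℕ}
    (S : Set ((Fin n → F) × (Fin n → F) × (Fin n → F))) :
    Set ((Fin n → F) × (Fin n → F) × (Fin n → F)) :=
  {x | ∀ y ∈ S,
    (∑ i, x.1 i * y.1 i) + (∑ i, x.2.1 i * y.2.1 i) + (∑ i, x.2.2 i * y.2.2 i) = 0}

/-- multiplication in the skew polynomial ring `R[x;θ]`, determined by
`a xⁱ * b xʲ = a θⁱ(b) x^{i+j}`. -/
noncomputable def skewMul {R : Type*} [CommRing R] (θ : R → R)
    (f g : Polynomial R) : Polynomial R :=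
  ∑ i ∈ f.support, ∑ j ∈ g.support,
    Polynomial.C (f.coeff i * θ^[i] (g.coeff j)) * Polynomial.X ^ (i + j)

/-- `f ≡ g` modulo the left ideal generated by `d` in the skew polynomial ring. -/
noncomputable def sModEq {R : Type*} [CommRing R] (θ : R → R)
    (d f g : Polynomial R) : Prop :=
  ∃ h, f - g = skewMul θ h d

/-- the substitution map `f(x) ↦ f(αx)` (with `θ(α) = α`, so `(αx)ⁱ = αⁱxⁱ`). -/
noncomputable def rhoMap {R : Type*} [CommRing R] (α : R) (f : Polynomial R) :
    Polynomial R :=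
  ∑ i ∈ f.support, Polynomial.C (f.coeff i * α ^ i) * Polynomial.X ^ i


lemma charP_aux (p m : ℕ) (hp : Nat.Prime p) (F : Type*) [Field F] [Fintype F]
    (hcard : Fintype.card F = p ^ m) : CharP F p := by
  have h0 : ((p:F)) ^ m = 0 := by
    rw [← Nat.cast_pow, ← hcard]; exact Nat.cast_card_eq_zero F
  have hm : m ≠ 0 := by
    rintro rfl; simp [pow_zero] at hcard
    have := Fintype.one_lt_card (α := F); omega
  exact (CharP.charP_iff_prime_eq_zero hp).2 (pow_eq_zero_iff hm |>.mp h0)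

open R3 in
/-- `Φ ∘ τ_α = π₃ ∘ Φ`, where `τ_α` is the skew `α`-constacyclic shift on `Rⁿ`
(w.r.t. `θ_t : a+ub+vc ↦ a^{p^t}+ub^{p^t}+vc^{p^t}`) and `π₃` applies the skew
`α`-constacyclic shift of `F_qⁿ` on each of the three Gray blocks. -/
theorem stmt8 (p m t : ℕ) (hp : Nat.Prime p) (hpodd : Odd p)
    (F : Type*) [Field F] [Fintype F] (hcard : Fintype.card F = p ^ m)
    (ht : t ∣ m) (htpos : 0 < t)
    (α : F) (hαunit : α ≠ 0) (hαfix : α ^ p ^ t = α)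
    (n : ℕ) [NeZero n] (x : Fin n → R3 F) :
    grayV (tauShift (R3.lift (fun a : F => a ^ p ^ t)) (ofF α) x) =
      (tauShift (fun a : F => a ^ p ^ t) α (grayV x).1,
       tauShift (fun a : F => a ^ p ^ t) α (grayV x).2.1,
       tauShift (fun a : F => a ^ p ^ t) α (grayV x).2.2) := by
  haveI : Fact p.Prime := ⟨hp⟩
  haveI : CharP F p := charP_aux p m hp F hcard
  have hadd : ∀ a b : F, (a + b) ^ p ^ t = a ^ p ^ t + b ^ p ^ t :=
    fun a b => add_pow_char_pow a b p t
  refine Prod.ext ?_ (Prod.ext ?_ ?_) <;> funext i <;>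
    simp only [grayV, tauShift, R3.lift] <;> split <;>
    simp [R3.ofF, R3.mul_a, R3.mul_b, R3.mul_c, hadd, mul_add]
end

section
/- A linear code C of length n over R is skew α-constacyclic (i.e., τ_α(C) = C) if and only if its Gray image Φ(C) ⊆ F_q^{3n} is a skew α-quasi-cyclic code of index 3 (i.e., π₃(Φ(C)) = Φ(C)). -/
open R3 in
lemma grayV_inj {F : Type*} [CommRing F] {n : ℕ} :
    Function.Injective (grayV (F := F) (n := n)) := by
  intro x y h
  funext i
  have h1 := congrArg (fun t => t.1 i) h
  have h2 := congrArg (fun t => t.2.1 i) h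
  have h3 := congrArg (fun t => t.2.2 i) h
  simp only [grayV] at h1 h2 h3
  ext
  · exact h1
  · have := h2; rw [h1] at this; exact add_left_cancel this
  · have := h3; rw [h1] at this; exact add_left_cancel this

open R3 in
lemma grayV_tauShift {F : Type*} [CommRing F] {n : ℕ} [NeZero n]
    (θ : F → F) (hθ : ∀ a b, θ (a + b) = θ a + θ b) (α : F) (x : Fin n → R3 F) :
    grayV (tauShift (R3.lift θ) (ofF α) x) =
      (tauShift θ α (grayV x).1, tauShift θ α (grayV x).2.1,
        tauShift θ α (grayV x).2.2) := by
  have key : ∀ i : Fin n,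
      (if i = 0 then ofF α else 1) * R3.lift θ (x (i - 1)) =
        ⟨(if i = 0 then α else 1) * θ ((x (i - 1)).a),
         (if i = 0 then α else 1) * θ ((x (i - 1)).b),
         (if i = 0 then α else 1) * θ ((x (i - 1)).c)⟩ := by
    intro i
    ext <;> by_cases h : i = 0 <;> simp [h, ofF, R3.lift]
  simp only [grayV, tauShift, Prod.mk.injEq]
  refine ⟨funext fun i => ?_, funext fun i => ?_, funext fun i => ?_⟩
  · rw [key i]
    simp only [tauShift]
  · rw [key i]
    show _ * θ _ + _ * θ _ = _
    rw [← mul_add, ← hθ]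
    simp only [tauShift]
  · rw [key i]
    show _ * θ _ + _ * θ _ = _
    rw [← mul_add, ← hθ]
    simp only [tauShift]

open R3 in
/-- a linear code `C ⊆ Rⁿ` is skew `α`-constacyclic iff its Gray image is a
skew `α`-quasi-cyclic code of index 3 in `F_q^{3n}`. -/
theorem stmt9 (p m t : ℕ) (hp : Nat.Prime p) (hpodd : Odd p)
    (F : Type*) [Field F] [Fintype F] (hcard : Fintype.card F = p ^ m)
    (ht : t ∣ m) (htpos : 0 < t)
    (α : F) (hαunit : α ≠ 0) (hαfix : α ^ p ^ t = α)
    (n : ℕ) [NeZero n] (C : Submodule (R3 F) (Fin n → R3 F)) :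
    tauShift (R3.lift (fun a : F => a ^ p ^ t)) (ofF α) '' (C : Set (Fin n → R3 F))
        = (C : Set (Fin n → R3 F)) ↔
      (fun tr : (Fin n → F) × (Fin n → F) × (Fin n → F) =>
          (tauShift (fun a : F => a ^ p ^ t) α tr.1,
           tauShift (fun a : F => a ^ p ^ t) α tr.2.1,
           tauShift (fun a : F => a ^ p ^ t) α tr.2.2)) ''
          (grayV '' (C : Set (Fin n → R3 F)))
        = grayV '' (C : Set (Fin n → R3 F)) := by
  classical
  -- establish CharP F p
  obtain ⟨k, hqp', hcardq'⟩ := FiniteField.card F (ringChar F)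
  haveI hcharq : CharP F (ringChar F) := ringChar.charP F
  have hrc : ringChar F = p := by
    have hdvd : ringChar F ∣ p ^ m := by
      rw [← hcard, hcardq']
      exact dvd_pow_self _ k.pos.ne'
    exact (Nat.prime_dvd_prime_iff_eq hqp' hp).mp (hqp'.dvd_of_dvd_pow hdvd)
  haveI : CharP F p := hrc ▸ hcharq
  haveI : Fact p.Prime := ⟨hp⟩
  have hθadd : ∀ a b : F, (a + b) ^ p ^ t = a ^ p ^ t + b ^ p ^ t := fun a b =>
    add_pow_char_pow a b p t
  set θ : F → F := fun a : F => a ^ p ^ t with hθ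
  set G := grayV (F := F) (n := n)
  set T := tauShift (n := n) (R3.lift θ) (ofF α)
  set S := fun tr : (Fin n → F) × (Fin n → F) × (Fin n → F) =>
    (tauShift θ α tr.1, tauShift θ α tr.2.1, tauShift θ α tr.2.2)
  have hcomm : ∀ x, G (T x) = S (G x) := fun x => grayV_tauShift θ hθadd α x
  have himg : S '' (G '' (C : Set (Fin n → R3 F)))
      = G '' (T '' (C : Set (Fin n → R3 F))) := by
    rw [← Set.image_comp, ← Set.image_comp]
    exact Set.image_congr' (fun x => (hcomm x).symm)
  constructor
  · intro h
    rw [himg, h]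
  · intro h
    rw [himg] at h
    exact Set.image_injective.mpr grayV_inj h
end

section
/- Let C be an R-submodule of Rⁿ and define C₁ = {a ∈ F_qⁿ : a + ub + vc ∈ C for some b, c}, C₂ = {a+b : a+ub+vc ∈ C for some c}, C₃ = {a+c : a+ub+vc ∈ C for some b}. Then C = (1-u-v)C₁ ⊕ uC₂ ⊕ vC₃, i.e., every element of C can be written uniquely as (1-u-v)x + uy + vz with x ∈ C₁, y ∈ C₂, z ∈ C₃, and conversely all such combinations lie in C. In particular |C| = |C₁|·|C₂|·|C₃|. -/
open R3 in
lemma comb_eq {F : Type*} [CommRing F] (t s r : F) :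
    (1 - u - v) * ofF t + u * ofF s + v * ofF r = (⟨t, s - t, r - t⟩ : R3 F) := by
  ext <;> simp [u, v, ofF, sub_eq_add_neg] <;> ring

open R3 in
/-- `C = (1-u-v)C₁ ⊕ uC₂ ⊕ vC₃`: unique decomposition of codewords,
closure under all such combinations, and `|C| = |C₁|·|C₂|·|C₃|`. -/
theorem stmt10 (p m : ℕ) (hp : Nat.Prime p) (hpodd : Odd p)
    (F : Type*) [Field F] [Fintype F] (hcard : Fintype.card F = p ^ m)
    (n : ℕ) (C : Submodule (R3 F) (Fin n → R3 F)) :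
    (∀ x ∈ C, ∃! tr : (Fin n → F) × (Fin n → F) × (Fin n → F),
        tr.1 ∈ comp1 (C : Set (Fin n → R3 F)) ∧
        tr.2.1 ∈ comp2 (C : Set (Fin n → R3 F)) ∧
        tr.2.2 ∈ comp3 (C : Set (Fin n → R3 F)) ∧
        x = fun i => (1 - u - v) * ofF (tr.1 i) + u * ofF (tr.2.1 i)
            + v * ofF (tr.2.2 i)) ∧
    (∀ a b c : Fin n → F, a ∈ comp1 (C : Set (Fin n → R3 F)) →
        b ∈ comp2 (C : Set (Fin n → R3 F)) → c ∈ comp3 (C : Set (Fin n → R3 F)) →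
        (fun i => (1 - u - v) * ofF (a i) + u * ofF (b i) + v * ofF (c i)) ∈ C) ∧
    Nat.card C = Nat.card (comp1 (C : Set (Fin n → R3 F))) *
        Nat.card (comp2 (C : Set (Fin n → R3 F))) *
        Nat.card (comp3 (C : Set (Fin n → R3 F))) := by
  classical
  have key : ∀ (t s r : Fin n → F),
      (fun i => (1 - u - v) * ofF (t i) + u * ofF (s i) + v * ofF (r i))
        = fun i => (⟨t i, s i - t i, r i - t i⟩ : R3 F) := by
    intro t s r; funext i; exact comb_eq _ _ _
  have closure : ∀ a b c : Fin n → F, a ∈ comp1 (C : Set (Fin n → R3 F)) →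
      b ∈ comp2 (C : Set (Fin n → R3 F)) → c ∈ comp3 (C : Set (Fin n → R3 F)) →
      (fun i => (1 - u - v) * ofF (a i) + u * ofF (b i) + v * ofF (c i)) ∈ C := by
    rintro a b c ⟨x, hx, rfl⟩ ⟨y, hy, rfl⟩ ⟨z, hz, rfl⟩
    have : (fun i => (1 - u - v) * ofF ((x i).a) + u * ofF ((y i).a + (y i).b)
        + v * ofF ((z i).a + (z i).c))
        = ((1 - u - v : R3 F)) • x + (u : R3 F) • y + (v : R3 F) • z := by
      funext i
      show _ = (1 - u - v) * x i + u * y i + v * z i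
      ext <;> simp [u, v, ofF, sub_eq_add_neg] <;> ring
    rw [this]
    exact C.add_mem (C.add_mem (C.smul_mem _ hx) (C.smul_mem _ hy)) (C.smul_mem _ hz)
  refine ⟨?_, closure, ?_⟩
  · intro x hx
    refine ⟨(fun i => (x i).a, fun i => (x i).a + (x i).b, fun i => (x i).a + (x i).c),
      ⟨⟨x, hx, rfl⟩, ⟨x, hx, rfl⟩, ⟨x, hx, rfl⟩, ?_⟩, ?_⟩
    · rw [key]; funext i; ext <;> simp
    · rintro ⟨t1, t2, t3⟩ ⟨-, -, -, heq⟩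
      rw [key] at heq
      have h : ∀ i, x i = ⟨t1 i, t2 i - t1 i, t3 i - t1 i⟩ := fun i => congrFun heq i
      refine Prod.ext ?_ (Prod.ext ?_ ?_) <;> funext i <;>
        simp only [h i] <;> ring
  · have e : C ≃ (comp1 (C : Set (Fin n → R3 F)) × comp2 (C : Set (Fin n → R3 F))
        × comp3 (C : Set (Fin n → R3 F))) :=
      { toFun := fun x => (⟨fun i => ((x : Fin n → R3 F) i).a, x, x.2, rfl⟩,
          ⟨fun i => ((x : Fin n → R3 F) i).a + ((x : Fin n → R3 F) i).b, x, x.2, rfl⟩,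
          ⟨fun i => ((x : Fin n → R3 F) i).a + ((x : Fin n → R3 F) i).c, x, x.2, rfl⟩)
        invFun := fun t => ⟨fun i => (1 - u - v) * ofF (t.1.1 i) + u * ofF (t.2.1.1 i)
            + v * ofF (t.2.2.1 i), closure _ _ _ t.1.2 t.2.1.2 t.2.2.2⟩
        left_inv := fun x => Subtype.ext (funext fun i => by
          show (1 - u - v) * ofF (((x : Fin n → R3 F)) i).a
              + u * ofF ((((x : Fin n → R3 F)) i).a + (((x : Fin n → R3 F)) i).b)
              + v * ofF ((((x : Fin n → R3 F)) i).a + (((x : Fin n → R3 F)) i).c)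
              = ((x : Fin n → R3 F)) i
          rw [comb_eq]; ext <;> simp)
        right_inv := fun t => by
          refine Prod.ext (Subtype.ext (funext fun i => ?_))
            (Prod.ext (Subtype.ext (funext fun i => ?_)) (Subtype.ext (funext fun i => ?_)))
          · show ((1 - u - v) * ofF ((t.1 : Fin n → F) i) + u * ofF ((t.2.1 : Fin n → F) i)
                + v * ofF ((t.2.2 : Fin n → F) i)).a = (t.1 : Fin n → F) i
            rw [comb_eq]
          · show ((1 - u - v) * ofF ((t.1 : Fin n → F) i) + u * ofF ((t.2.1 : Fin n → F) i)
                + v * ofF ((t.2.2 : Fin n → F) i)).a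
              + ((1 - u - v) * ofF ((t.1 : Fin n → F) i) + u * ofF ((t.2.1 : Fin n → F) i)
                + v * ofF ((t.2.2 : Fin n → F) i)).b = (t.2.1 : Fin n → F) i
            rw [comb_eq]; simp
          · show ((1 - u - v) * ofF ((t.1 : Fin n → F) i) + u * ofF ((t.2.1 : Fin n → F) i)
                + v * ofF ((t.2.2 : Fin n → F) i)).a
              + ((1 - u - v) * ofF ((t.1 : Fin n → F) i) + u * ofF ((t.2.1 : Fin n → F) i)
                + v * ofF ((t.2.2 : Fin n → F) i)).c = (t.2.2 : Fin n → F) i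
            rw [comb_eq]; simp }
    rw [Nat.card_congr e, Nat.card_prod, Nat.card_prod, mul_assoc]
end

section
/- Let C be a linear code of length n over R with decomposition C = (1-u-v)C₁ ⊕ uC₂ ⊕ vC₃. Then the Gray image satisfies Φ(C) = C₁ × C₂ × C₃ ⊆ F_q^{3n}. -/
open R3 in
/-- the Gray image of `C = (1-u-v)C₁ ⊕ uC₂ ⊕ vC₃` is `C₁ × C₂ × C₃`. -/
theorem stmt11 (p m : ℕ) (hp : Nat.Prime p) (hpodd : Odd p)
    (F : Type*) [Field F] [Fintype F] (hcard : Fintype.card F = p ^ m)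
    (n : ℕ) (C : Submodule (R3 F) (Fin n → R3 F)) :
    grayV '' (C : Set (Fin n → R3 F)) =
      (comp1 (C : Set (Fin n → R3 F))) ×ˢ
        ((comp2 (C : Set (Fin n → R3 F))) ×ˢ (comp3 (C : Set (Fin n → R3 F)))) := by
  ext t
  constructor
  · rintro ⟨x, hx, rfl⟩
    exact ⟨⟨x, hx, rfl⟩, ⟨x, hx, rfl⟩, ⟨x, hx, rfl⟩⟩
  · rintro ⟨⟨x, hx, hx'⟩, ⟨y, hy, hy'⟩, ⟨z, hz, hz'⟩⟩
    refine ⟨(⟨1,-1,-1⟩ : R3 F) • x + (u : R3 F) • y + (v : R3 F) • z, ?_, ?_⟩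
    · exact C.add_mem (C.add_mem (C.smul_mem _ hx) (C.smul_mem _ hy)) (C.smul_mem _ hz)
    · obtain ⟨t1, t2, t3⟩ := t
      simp only [grayV, Prod.mk.injEq] at hx' hy' hz' ⊢
      refine ⟨?_, ?_, ?_⟩ <;> funext i <;>
        simp [hx', hy', hz', u, v, smul_eq_mul] <;> ring
end

section
/- Let C = (1-u-v)C₁ ⊕ uC₂ ⊕ vC₃ be a linear code of length n over R. Then C^⊥ = (1-u-v)C₁^⊥ ⊕ uC₂^⊥ ⊕ vC₃^⊥, and C is self-dual if and only if C₁, C₂, C₃ are all self-dual codes over F_q. -/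
section Aux

open R3

variable {F : Type*} [CommRing F] {n : ℕ}

private def aH : R3 F →+ F where
  toFun := R3.a
  map_zero' := rfl
  map_add' _ _ := rfl

private def bH : R3 F →+ F where
  toFun := R3.b
  map_zero' := rfl
  map_add' _ _ := rfl

private def cH : R3 F →+ F where
  toFun := R3.c
  map_zero' := rfl
  map_add' _ _ := rfl

private lemma sum_a (f : Fin n → R3 F) : (∑ i, f i).a = ∑ i, (f i).a :=
  map_sum aH f Finset.univ

private lemma sum_b (f : Fin n → R3 F) : (∑ i, f i).b = ∑ i, (f i).b :=
  map_sum bH f Finset.univ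

private lemma sum_c (f : Fin n → R3 F) : (∑ i, f i).c = ∑ i, (f i).c :=
  map_sum cH f Finset.univ

private lemma sum1 (x y : Fin n → R3 F) :
    ∑ i, (x i).a * (y i).a = (∑ i, x i * y i).a := by
  rw [sum_a]; simp

private lemma sum2 (x y : Fin n → R3 F) :
    ∑ i, ((x i).a + (x i).b) * ((y i).a + (y i).b)
      = (∑ i, x i * y i).a + (∑ i, x i * y i).b := by
  rw [sum_a, sum_b, ← Finset.sum_add_distrib]
  refine Finset.sum_congr rfl fun i _ => ?_
  simp only [mul_a, mul_b]; ring

private lemma sum3 (x y : Fin n → R3 F) :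
    ∑ i, ((x i).a + (x i).c) * ((y i).a + (y i).c)
      = (∑ i, x i * y i).a + (∑ i, x i * y i).c := by
  rw [sum_a, sum_c, ← Finset.sum_add_distrib]
  refine Finset.sum_congr rfl fun i _ => ?_
  simp only [mul_a, mul_c]; ring

private lemma eq_zero_iff (z : R3 F) :
    z = 0 ↔ z.a = 0 ∧ z.a + z.b = 0 ∧ z.a + z.c = 0 := by
  constructor
  · rintro rfl; simp
  · rintro ⟨h1, h2, h3⟩
    rw [h1, zero_add] at h2 h3
    ext <;> assumption

private lemma key (x y : Fin n → R3 F) :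
    (∑ i, x i * y i) = 0 ↔
      (∑ i, (x i).a * (y i).a = 0) ∧
      (∑ i, ((x i).a + (x i).b) * ((y i).a + (y i).b) = 0) ∧
      (∑ i, ((x i).a + (x i).c) * ((y i).a + (y i).c) = 0) := by
  rw [eq_zero_iff, sum1, sum2, sum3]

private lemma mem_dual_iff (C : Set (Fin n → R3 F)) (x : Fin n → R3 F) :
    x ∈ dualCode C ↔
      (fun i => (x i).a) ∈ dualCode (comp1 C) ∧
      (fun i => (x i).a + (x i).b) ∈ dualCode (comp2 C) ∧
      (fun i => (x i).a + (x i).c) ∈ dualCode (comp3 C) := by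
  constructor
  · intro h
    refine ⟨?_, ?_, ?_⟩ <;> rintro z ⟨y, hy, rfl⟩
    · exact ((key x y).mp (h y hy)).1
    · exact ((key x y).mp (h y hy)).2.1
    · exact ((key x y).mp (h y hy)).2.2
  · rintro ⟨h1, h2, h3⟩ y hy
    exact (key x y).mpr ⟨h1 _ ⟨y, hy, rfl⟩, h2 _ ⟨y, hy, rfl⟩, h3 _ ⟨y, hy, rfl⟩⟩

private lemma mem_iff (C : Submodule (R3 F) (Fin n → R3 F)) (x : Fin n → R3 F) :
    x ∈ (C : Set (Fin n → R3 F)) ↔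
      (fun i => (x i).a) ∈ comp1 (C : Set (Fin n → R3 F)) ∧
      (fun i => (x i).a + (x i).b) ∈ comp2 (C : Set (Fin n → R3 F)) ∧
      (fun i => (x i).a + (x i).c) ∈ comp3 (C : Set (Fin n → R3 F)) := by
  constructor
  · intro h
    exact ⟨⟨x, h, rfl⟩, ⟨x, h, rfl⟩, ⟨x, h, rfl⟩⟩
  · rintro ⟨⟨y1, hy1, h1⟩, ⟨y2, hy2, h2⟩, ⟨y3, hy3, h3⟩⟩
    have hz : (⟨1, -1, -1⟩ : R3 F) • y1 + (u : R3 F) • y2 + (v : R3 F) • y3 ∈ C :=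
      C.add_mem (C.add_mem (C.smul_mem _ hy1) (C.smul_mem _ hy2)) (C.smul_mem _ hy3)
    have hx : x = (⟨1, -1, -1⟩ : R3 F) • y1 + (u : R3 F) • y2 + (v : R3 F) • y3 := by
      funext i
      have e1 := congrFun h1 i
      have e2 := congrFun h2 i
      have e3 := congrFun h3 i
      ext
      · simp only [Pi.add_apply, Pi.smul_apply, smul_eq_mul, add_a, mul_a, u, v]
        linear_combination e1
      · simp only [Pi.add_apply, Pi.smul_apply, smul_eq_mul, add_b, mul_b, u, v]
        linear_combination e2 - e1
      · simp only [Pi.add_apply, Pi.smul_apply, smul_eq_mul, add_c, mul_c, u, v]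
        linear_combination e3 - e1
    rw [hx]
    exact hz

private lemma gray_build (a b c : Fin n → F) :
    (fun i => (1 - u - v) * ofF (a i) + u * ofF (b i) + v * ofF (c i) : Fin n → R3 F)
      = fun i => ⟨a i, b i - a i, c i - a i⟩ := by
  funext i
  ext <;> simp [u, v, ofF, sub_eq_add_neg] <;> ring

end Aux

open R3 in
/-- `C^⊥ = (1-u-v)C₁^⊥ ⊕ uC₂^⊥ ⊕ vC₃^⊥`, and `C` is self-dual iff
`C₁`, `C₂`, `C₃` are all self-dual. -/
theorem stmt13 (p m : ℕ) (hp : Nat.Prime p) (hpodd : Odd p)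
    (F : Type*) [Field F] [Fintype F] (hcard : Fintype.card F = p ^ m)
    (n : ℕ) (C : Submodule (R3 F) (Fin n → R3 F)) :
    (dualCode (C : Set (Fin n → R3 F)) =
      {x : Fin n → R3 F | ∃ a b c : Fin n → F,
        a ∈ dualCode (comp1 (C : Set (Fin n → R3 F))) ∧
        b ∈ dualCode (comp2 (C : Set (Fin n → R3 F))) ∧
        c ∈ dualCode (comp3 (C : Set (Fin n → R3 F))) ∧
        x = fun i => (1 - u - v) * ofF (a i) + u * ofF (b i) + v * ofF (c i)}) ∧
    (dualCode (C : Set (Fin n → R3 F)) = (C : Set (Fin n → R3 F)) ↔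
      (dualCode (comp1 (C : Set (Fin n → R3 F))) = comp1 (C : Set (Fin n → R3 F)) ∧
       dualCode (comp2 (C : Set (Fin n → R3 F))) = comp2 (C : Set (Fin n → R3 F)) ∧
       dualCode (comp3 (C : Set (Fin n → R3 F))) = comp3 (C : Set (Fin n → R3 F)))) := by
  constructor
  · ext x
    simp only [Set.mem_setOf_eq]
    rw [mem_dual_iff]
    constructor
    · rintro ⟨h1, h2, h3⟩
      refine ⟨_, _, _, h1, h2, h3, ?_⟩
      rw [gray_build]
      funext i
      ext <;> simp
    · rintro ⟨a, b, c, h1, h2, h3, rfl⟩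
      rw [gray_build]
      refine ⟨by simpa using h1, by simpa using h2, by simpa using h3⟩
  · constructor
    · intro hsd
      refine ⟨?_, ?_, ?_⟩
      · ext z
        constructor
        · intro hz
          have hb : (fun i => (⟨z i, -z i, -z i⟩ : R3 F)) ∈ dualCode (C : Set (Fin n → R3 F)) := by
            rw [mem_dual_iff]
            refine ⟨by simpa using hz, fun y hy => by simp, fun y hy => by simp⟩
          rw [hsd, mem_iff] at hb
          simpa using hb.1
        · intro hz
          have hb : (fun i => (⟨z i, -z i, -z i⟩ : R3 F)) ∈ (C : Set (Fin n → R3 F)) := by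
            rw [mem_iff]
            exact ⟨by simpa using hz,
              ⟨0, C.zero_mem, by funext i; simp⟩,
              ⟨0, C.zero_mem, by funext i; simp⟩⟩
          rw [← hsd, mem_dual_iff] at hb
          simpa using hb.1
      · ext z
        constructor
        · intro hz
          have hb : (fun i => (⟨0, z i, 0⟩ : R3 F)) ∈ dualCode (C : Set (Fin n → R3 F)) := by
            rw [mem_dual_iff]
            refine ⟨fun y hy => by simp, by simpa using hz, fun y hy => by simp⟩
          rw [hsd, mem_iff] at hb
          simpa using hb.2.1
        · intro hz
          have hb : (fun i => (⟨0, z i, 0⟩ : R3 F)) ∈ (C : Set (Fin n → R3 F)) := by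
            rw [mem_iff]
            exact ⟨⟨0, C.zero_mem, by funext i; simp⟩, by simpa using hz,
              ⟨0, C.zero_mem, by funext i; simp⟩⟩
          rw [← hsd, mem_dual_iff] at hb
          simpa using hb.2.1
      · ext z
        constructor
        · intro hz
          have hb : (fun i => (⟨0, 0, z i⟩ : R3 F)) ∈ dualCode (C : Set (Fin n → R3 F)) := by
            rw [mem_dual_iff]
            refine ⟨fun y hy => by simp, fun y hy => by simp, by simpa using hz⟩
          rw [hsd, mem_iff] at hb
          simpa using hb.2.2
        · intro hz
          have hb : (fun i => (⟨0, 0, z i⟩ : R3 F)) ∈ (C : Set (Fin n → R3 F)) := by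
            rw [mem_iff]
            exact ⟨⟨0, C.zero_mem, by funext i; simp⟩,
              ⟨0, C.zero_mem, by funext i; simp⟩, by simpa using hz⟩
          rw [← hsd, mem_dual_iff] at hb
          simpa using hb.2.2
    · rintro ⟨h1, h2, h3⟩
      ext x
      rw [mem_dual_iff, h1, h2, h3]
      exact (mem_iff C x).symm
end

section
/- Let C be a skew α-constacyclic code of odd-allowed length n over R with respect to θ_t of order k, where α is a unit of R fixed by θ_t with α² = 1. If gcd(n, k) = 1, then C is closed under the ordinary (non-skew) α-constacyclic shift (c₀,…,c_{n-1}) ↦ (αc_{n-1}, c₀,…,c_{n-2}); that is, C is an α-constacyclic code. -/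
namespace R3

lemma lift_iterate {F : Type*} (σ : F → F) (j : ℕ) : (lift σ)^[j] = lift σ^[j] := by
  induction j with
  | zero => rfl
  | succ j ih =>
    rw [Function.iterate_succ, ih, Function.iterate_succ]
    rfl

def liftRingHom {F : Type*} [CommRing F] (σ : F →+* F) : R3 F →+* R3 F where
  toFun := lift σ
  map_one' := by ext <;> simp [lift]
  map_mul' x y := by ext <;> simp [lift]
  map_zero' := by ext <;> simp [lift]
  map_add' x y := by ext <;> simp [lift]

end R3

section ConstacyclicShift

variable {R : Type*} [CommRing R] {n : ℕ} [NeZero n]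

def constaShift (α : R) (c : Fin n → R) : Fin n → R :=
  fun i => (if i = 0 then α else 1) * c (i - 1)

lemma constaShift_smul (α r : R) (c : Fin n → R) :
    constaShift α (r • c) = r • constaShift α c := by
  funext i
  simp only [constaShift, Pi.smul_apply, smul_eq_mul]
  ring

open Fin.NatCast in
lemma constaShift_iterate_apply (α : R) {j : ℕ} (hj : j ≤ n) (c : Fin n → R) (i : Fin n) :
    (constaShift α)^[j] c i = (if (i : ℕ) < j then α else 1) * c (i - j) := by
  induction j generalizing i with
  | zero => simp
  | succ j ih =>
    rw [Function.iterate_succ_apply', constaShift, ih (by omega), ← mul_assoc,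
      sub_sub, Nat.cast_succ, add_comm (1 : Fin n)]
    congr 1
    obtain ⟨n, rfl⟩ := Nat.exists_eq_succ_of_ne_zero (NeZero.ne n)
    rcases eq_or_ne i 0 with rfl | hi
    · simp
      omega
    · have hi' : (i : ℕ) ≠ 0 := Fin.val_ne_zero_iff.mpr hi
      simp only [hi, if_false, one_mul, Fin.coe_sub_one]
      split_ifs <;> first | rfl | omega

lemma constaShift_iterate_self (α : R) : (constaShift α)^[n] = (α • · : (Fin n → R) → _) := by
  funext c i
  simp [constaShift_iterate_apply α le_rfl, Fin.natCast_self]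

lemma commute_constaShift_comp {θ : R →* R} {α : R} (hθα : θ α = α) :
    Function.Commute (constaShift α) (fun c : Fin n → R => θ ∘ c) := by
  intro c
  funext i
  simp only [constaShift, Function.comp_apply, map_mul]
  split_ifs <;> simp [hθα]

lemma iterate_comp_left_apply {β γ : Type*} (f : β → β) (j : ℕ) (c : γ → β) :
    (fun c : γ → β => f ∘ c)^[j] c = f^[j] ∘ c := by
  induction j generalizing c with
  | zero => rfl
  | succ j ih => rw [Function.iterate_succ_apply, ih]; rfl

lemma tauShift_iterate_mul_add_one {θ : R →* R} {α : R} (hθα : θ α = α) {q : ℕ}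
    (hθ : (⇑θ)^[n * q + 1] = id) (c : Fin n → R) :
    (tauShift θ α)^[n * q + 1] c = α ^ q • constaShift α c := by
  have hτ : tauShift θ α = constaShift α ∘ fun c : Fin n → R => θ ∘ c := rfl
  rw [hτ, (commute_constaShift_comp hθα).comp_iterate, Function.comp_apply,
    iterate_comp_left_apply, hθ, Function.id_comp, Function.iterate_succ_apply',
    Function.iterate_mul, constaShift_iterate_self, smul_iterate_apply, constaShift_smul]

lemma exists_dvd_mul_add_one {n k : ℕ} [NeZero k] (h : n.Coprime k) : ∃ q, k ∣ n * q + 1 := by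
  refine ⟨(-(n : ZMod k)⁻¹).val, (ZMod.natCast_eq_zero_iff _ _).mp ?_⟩
  push_cast [ZMod.natCast_zmod_val]
  rw [mul_neg, ZMod.coe_mul_inv_eq_one n h, neg_add_cancel]

theorem constaShift_mem_of_tauShift_mem {θ : R →* R} {α : R} (hα : IsUnit α) (hθα : θ α = α)
    {k : ℕ} [NeZero k] (hθk : (⇑θ)^[k] = id) (hnk : n.Coprime k) (C : Submodule R (Fin n → R))
    (hC : ∀ c ∈ C, tauShift θ α c ∈ C) : ∀ c ∈ C, constaShift α c ∈ C := by
  intro c hc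
  obtain ⟨q, s, hs⟩ := exists_dvd_mul_add_one hnk
  obtain ⟨a, rfl⟩ := hα
  have hθ : (⇑θ)^[n * q + 1] = id := by rw [hs, Function.iterate_mul, hθk, Function.iterate_id]
  have hmem : (tauShift θ a)^[n * q + 1] c ∈ C := Function.Iterate.rec (· ∈ C) hc hC _
  rw [tauShift_iterate_mul_add_one hθα hθ] at hmem
  simpa [smul_smul, ← mul_pow] using C.smul_mem ((a⁻¹ : Rˣ) ^ q : R) hmem

end ConstacyclicShift

open R3 in
theorem stmt17_general (p m t k n : ℕ) (hp : Nat.Prime p)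
    (F : Type*) [Field F] [Fintype F] (hcard : Fintype.card F = p ^ m)
    (ht : t ∣ m) (hk : k = m / t) [NeZero n]
    (α : R3 F) (hαunit : IsUnit α)
    (hαfix : R3.lift (fun a : F => a ^ p ^ t) α = α)
    (C : Submodule (R3 F) (Fin n → R3 F))
    (hC : tauShift (R3.lift (fun a : F => a ^ p ^ t)) α ''
        (C : Set (Fin n → R3 F)) = (C : Set (Fin n → R3 F)))
    (hgcd : Nat.gcd n k = 1) :
    ∀ cw ∈ C, (fun i : Fin n => (if i = 0 then α else 1) * cw (i - 1)) ∈ C := by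
  have : Fact p.Prime := ⟨hp⟩
  have : CharP F p := charP_of_card_eq_prime_pow hcard
  have hm : m ≠ 0 := by
    rintro rfl
    exact (Fintype.one_lt_card (α := F)).ne' (by rw [hcard, pow_zero])
  have htk : t * k = m := hk ▸ Nat.mul_div_cancel' ht
  have : NeZero k := ⟨right_ne_zero_of_mul (htk ▸ hm)⟩
  have hθk : (R3.lift (fun a : F => a ^ p ^ t))^[k] = id := by
    rw [R3.lift_iterate, pow_iterate, ← pow_mul, htk, ← hcard]
    funext x
    ext <;> exact FiniteField.pow_card _
  exact constaShift_mem_of_tauShift_mem (θ := R3.liftRingHom (iterateFrobenius F p t)) hαunit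
    hαfix hθk hgcd C fun c hc => hC.subset ⟨c, hc, rfl⟩

open R3 in
/-- if `gcd(n,k) = 1`, a skew `α`-constacyclic code over `R` (with `α² = 1`,
`α` fixed by `θ_t` of order `k = m/t`) is closed under the ordinary `α`-constacyclic
shift, i.e. it is an `α`-constacyclic code. -/
theorem stmt17 (p m t k n : ℕ) (hp : Nat.Prime p) (hpodd : Odd p)
    (F : Type*) [Field F] [Fintype F] (hcard : Fintype.card F = p ^ m)
    (ht : t ∣ m) (htpos : 0 < t) (hk : k = m / t) [NeZero n]
    (α : R3 F) (hαsq : α ^ 2 = 1) (hαunit : IsUnit α)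
    (hαfix : R3.lift (fun a : F => a ^ p ^ t) α = α)
    (C : Submodule (R3 F) (Fin n → R3 F))
    (hC : tauShift (R3.lift (fun a : F => a ^ p ^ t)) α ''
        (C : Set (Fin n → R3 F)) = (C : Set (Fin n → R3 F)))
    (hgcd : Nat.gcd n k = 1) :
    ∀ cw ∈ C, (fun i : Fin n => (if i = 0 then α else 1) * cw (i - 1)) ∈ C :=
  stmt17_general p m t k n hp F hcard ht hk α hαunit hαfix C hC hgcd
end

section
/- Let α = α₁ + uα₂ + vα₃ be a unit of R with αᵢ ∈ F_{p^t}. A linear code C = (1-u-v)C₁ ⊕ uC₂ ⊕ vC₃ of length n over R is skew α-constacyclic with respect to θ_t if and only if C₁ is skew α₁-constacyclic, C₂ is skew (α₁+α₂)-constacyclic, and C₃ is skew (α₁+α₃)-constacyclic over F_q with respect to the Frobenius a ↦ a^{p^t}. -/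
section AuxProof

open R3

variable {F : Type*} [CommRing F] {n : ℕ} [NeZero n]

lemma R3.eq_of_gray {x y : R3 F} (h1 : x.a = y.a) (h2 : x.a + x.b = y.a + y.b)
    (h3 : x.a + x.c = y.a + y.c) : x = y := by
  ext
  · exact h1
  · have : x.b = y.b := by
      have := h2; rw [h1] at this; exact add_left_cancel this
    exact this
  · have : x.c = y.c := by
      have := h3; rw [h1] at this; exact add_left_cancel this
    exact this

lemma mem_iff_gray (C : Submodule (R3 F) (Fin n → R3 F)) (x : Fin n → R3 F) :
    x ∈ C ↔ ((fun i => (x i).a) ∈ comp1 (C : Set (Fin n → R3 F)) ∧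
      (fun i => (x i).a + (x i).b) ∈ comp2 (C : Set (Fin n → R3 F)) ∧
      (fun i => (x i).a + (x i).c) ∈ comp3 (C : Set (Fin n → R3 F))) := by
  constructor
  · intro hx
    exact ⟨⟨x, hx, rfl⟩, ⟨x, hx, rfl⟩, ⟨x, hx, rfl⟩⟩
  · rintro ⟨⟨w₁, hw₁, h1⟩, ⟨w₂, hw₂, h2⟩, ⟨w₃, hw₃, h3⟩⟩
    have hx : x = (⟨1, -1, -1⟩ : R3 F) • w₁ + (u : R3 F) • w₂ + (v : R3 F) • w₃ := by
      funext i
      have e1 := congrFun h1 i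
      have e2 := congrFun h2 i
      have e3 := congrFun h3 i
      apply R3.ext
      · simpa [u, v, Pi.smul_apply, smul_eq_mul] using e1
      · simp only [Pi.add_apply, Pi.smul_apply, smul_eq_mul, add_b, mul_b, mul_a, u, v]
        simp only [one_mul, neg_one_mul, zero_mul, mul_zero, mul_one]
        linear_combination e2 - e1
      · simp only [Pi.add_apply, Pi.smul_apply, smul_eq_mul, add_c, mul_c, mul_a, u, v]
        simp only [one_mul, neg_one_mul, zero_mul, mul_zero, mul_one]
        linear_combination e3 - e1
    rw [hx]
    exact C.add_mem (C.add_mem (C.smul_mem _ hw₁) (C.smul_mem _ hw₂)) (C.smul_mem _ hw₃)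

lemma gray1_tau (σ : F → F) (α : R3 F) (x : Fin n → R3 F) :
    (fun i => ((tauShift (R3.lift σ) α x) i).a)
      = tauShift σ α.a (fun i => (x i).a) := by
  funext i
  simp only [tauShift, R3.lift]
  split_ifs <;> simp [R3.lift]

lemma gray2_tau (σ : F → F) (hσ : ∀ a b : F, σ (a + b) = σ a + σ b)
    (α : R3 F) (x : Fin n → R3 F) :
    (fun i => ((tauShift (R3.lift σ) α x) i).a + ((tauShift (R3.lift σ) α x) i).b)
      = tauShift σ (α.a + α.b) (fun i => (x i).a + (x i).b) := by
  funext i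
  simp only [tauShift, R3.lift]
  split_ifs <;> simp [R3.lift, hσ] <;> ring

lemma gray3_tau (σ : F → F) (hσ : ∀ a b : F, σ (a + b) = σ a + σ b)
    (α : R3 F) (x : Fin n → R3 F) :
    (fun i => ((tauShift (R3.lift σ) α x) i).a + ((tauShift (R3.lift σ) α x) i).c)
      = tauShift σ (α.a + α.c) (fun i => (x i).a + (x i).c) := by
  funext i
  simp only [tauShift, R3.lift]
  split_ifs <;> simp [R3.lift, hσ] <;> ring

end AuxProof

open R3 in
/-- `C = (1-u-v)C₁ ⊕ uC₂ ⊕ vC₃` is skew `(α₁+uα₂+vα₃)`-constacyclic over `R`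
iff `C₁`, `C₂`, `C₃` are skew `α₁`-, `(α₁+α₂)`-, `(α₁+α₃)`-constacyclic over `F_q`
(w.r.t. the Frobenius `a ↦ a^{p^t}`). -/
theorem stmt19 (p m t n : ℕ) (hp : Nat.Prime p) (hpodd : Odd p)
    (F : Type*) [Field F] [Fintype F] (hcard : Fintype.card F = p ^ m)
    (ht : t ∣ m) (htpos : 0 < t) [NeZero n]
    (α₁ α₂ α₃ : F) (h1 : α₁ ^ p ^ t = α₁) (h2 : α₂ ^ p ^ t = α₂)
    (h3 : α₃ ^ p ^ t = α₃) (α : R3 F)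
    (hα : α = ofF α₁ + u * ofF α₂ + v * ofF α₃) (hαunit : IsUnit α)
    (C : Submodule (R3 F) (Fin n → R3 F)) :
    tauShift (R3.lift (fun a : F => a ^ p ^ t)) α '' (C : Set (Fin n → R3 F))
        = (C : Set (Fin n → R3 F)) ↔
      (tauShift (fun a : F => a ^ p ^ t) α₁ '' comp1 (C : Set (Fin n → R3 F))
          = comp1 (C : Set (Fin n → R3 F)) ∧
       tauShift (fun a : F => a ^ p ^ t) (α₁ + α₂) '' comp2 (C : Set (Fin n → R3 F))
          = comp2 (C : Set (Fin n → R3 F)) ∧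
       tauShift (fun a : F => a ^ p ^ t) (α₁ + α₃) '' comp3 (C : Set (Fin n → R3 F))
          = comp3 (C : Set (Fin n → R3 F))) := by 
  classical
  -- characteristic facts
  haveI hfp : Fact p.Prime := ⟨hp⟩
  have hm : m ≠ 0 := by
    rintro rfl
    have h2 : (1 : ℕ) < Fintype.card F := Fintype.one_lt_card
    rw [hcard, pow_zero] at h2
    exact absurd h2 (by norm_num)
  have hdvd : p ∣ Fintype.card F := by
    rw [hcard]; exact dvd_pow_self p hm
  have hchar : p ∣ ringChar F := (prime_dvd_char_iff_dvd_card p).mpr hdvd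
  have hrprime : (ringChar F).Prime := CharP.char_is_prime F (ringChar F)
  have hpq : p = ringChar F := ((Nat.prime_dvd_prime_iff_eq hp hrprime).mp hchar)
  haveI : CharP F p := hpq ▸ ringChar.charP F
  set σ : F → F := fun a : F => a ^ p ^ t with hσdef
  have hσ : ∀ a b : F, σ (a + b) = σ a + σ b := fun a b => add_pow_char_pow a b p t
  have hαa : α.a = α₁ := by rw [hα]; simp [ofF, u, v]
  have hαab : α.a + α.b = α₁ + α₂ := by rw [hα]; simp [ofF, u, v]
  have hαac : α.a + α.c = α₁ + α₃ := by rw [hα]; simp [ofF, u, v]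
  have g1 := fun x => gray1_tau (n := n) σ α x
  have g2 := fun x => gray2_tau (n := n) σ hσ α x
  have g3 := fun x => gray3_tau (n := n) σ hσ α x
  rw [hαa] at g1; rw [hαab] at g2; rw [hαac] at g3
  constructor
  · intro hC
    refine ⟨?_, ?_, ?_⟩
    · apply Set.eq_of_subset_of_subset
      · rintro y ⟨z, ⟨x, hx, rfl⟩, rfl⟩
        have hτx : tauShift (R3.lift σ) α x ∈ (C : Set (Fin n → R3 F)) := by
          rw [← hC]; exact ⟨x, hx, rfl⟩
        exact ⟨_, hτx, (g1 x).symm⟩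
      · rintro y ⟨x, hx, rfl⟩
        rw [← hC] at hx
        obtain ⟨w, hw, rfl⟩ := hx
        exact ⟨_, ⟨w, hw, rfl⟩, (g1 w).symm⟩
    · apply Set.eq_of_subset_of_subset
      · rintro y ⟨z, ⟨x, hx, rfl⟩, rfl⟩
        have hτx : tauShift (R3.lift σ) α x ∈ (C : Set (Fin n → R3 F)) := by
          rw [← hC]; exact ⟨x, hx, rfl⟩
        exact ⟨_, hτx, (g2 x).symm⟩
      · rintro y ⟨x, hx, rfl⟩
        rw [← hC] at hx
        obtain ⟨w, hw, rfl⟩ := hx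
        exact ⟨_, ⟨w, hw, rfl⟩, (g2 w).symm⟩
    · apply Set.eq_of_subset_of_subset
      · rintro y ⟨z, ⟨x, hx, rfl⟩, rfl⟩
        have hτx : tauShift (R3.lift σ) α x ∈ (C : Set (Fin n → R3 F)) := by
          rw [← hC]; exact ⟨x, hx, rfl⟩
        exact ⟨_, hτx, (g3 x).symm⟩
      · rintro y ⟨x, hx, rfl⟩
        rw [← hC] at hx
        obtain ⟨w, hw, rfl⟩ := hx
        exact ⟨_, ⟨w, hw, rfl⟩, (g3 w).symm⟩
  · rintro ⟨hC1, hC2, hC3⟩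
    apply Set.eq_of_subset_of_subset
    · rintro z ⟨x, hx, rfl⟩
      rw [SetLike.mem_coe, mem_iff_gray]
      refine ⟨?_, ?_, ?_⟩
      · rw [g1 x, ← hC1]
        exact ⟨_, ⟨x, hx, rfl⟩, rfl⟩
      · rw [g2 x, ← hC2]
        exact ⟨_, ⟨x, hx, rfl⟩, rfl⟩
      · rw [g3 x, ← hC3]
        exact ⟨_, ⟨x, hx, rfl⟩, rfl⟩
    · intro x hx
      have m1 : (fun i => (x i).a) ∈ comp1 (C : Set (Fin n → R3 F)) := ⟨x, hx, rfl⟩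
      have m2 : (fun i => (x i).a + (x i).b) ∈ comp2 (C : Set (Fin n → R3 F)) := ⟨x, hx, rfl⟩
      have m3 : (fun i => (x i).a + (x i).c) ∈ comp3 (C : Set (Fin n → R3 F)) := ⟨x, hx, rfl⟩
      rw [← hC1] at m1; rw [← hC2] at m2; rw [← hC3] at m3
      obtain ⟨y₁, hy₁, he₁⟩ := m1
      obtain ⟨y₂, hy₂, he₂⟩ := m2
      obtain ⟨y₃, hy₃, he₃⟩ := m3
      set w : Fin n → R3 F := fun i => ⟨y₁ i, y₂ i - y₁ i, y₃ i - y₁ i⟩ with hwdef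
      have hw1 : (fun i => (w i).a) = y₁ := rfl
      have hw2 : (fun i => (w i).a + (w i).b) = y₂ := by funext i; simp [hwdef]
      have hw3 : (fun i => (w i).a + (w i).c) = y₃ := by funext i; simp [hwdef]
      have hwC : w ∈ C := by
        rw [mem_iff_gray]
        exact ⟨hw1 ▸ hy₁, hw2 ▸ hy₂, hw3 ▸ hy₃⟩
      refine ⟨w, hwC, ?_⟩
      funext i
      apply R3.eq_of_gray
      · have := congrFun (g1 w) i
        rw [hw1, he₁] at this
        simpa using this
      · have := congrFun (g2 w) i
        rw [hw2, he₂] at this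
        simpa using this
      · have := congrFun (g3 w) i
        rw [hw3, he₃] at this
        simpa using this
end
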